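/- arXiv:math/0505389 — 5 statements merged into one kernel-verified Lean document; each statement's English description precedes it below -/
import Mathlib

section
/- Let f ∈ ℚ(T) be a rational function and let q ≥ 2 be an integer. Suppose that for every integer r ≥ 1, q^r is not a pole of f and the value f(q^r) is an integer. Then f is a polynomial, i.e. f lies in the image of ℚ[T] in ℚ(T). -/
open Polynomial Filter

/-- Clearing denominators: if the denominator of `a : ℚ` divides `D`, then `D * a` is an
integer. -/
lemma aux_den_dvd_int (a : ℚ) (D : ℕ) (hD : (a.den : ℕ) ∣ D) :
    ∃ z : ℤ, (D : ℚ) * a = (z : ℚ) := by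
  obtain ⟨k, hk⟩ := hD
  refine ⟨k * a.num, ?_⟩
  have := Rat.mul_den_eq_num a
  push_cast [hk]
  rw [mul_comm (a.den : ℚ) (k : ℚ), mul_assoc, mul_comm (a.den : ℚ) a, this]

/-- For any `p : ℚ[X]` there is a positive integer `D` such that `D * p.eval x` is an integer
whenever `x` is an integer. -/
lemma aux_clear_denoms (p : ℚ[X]) :
    ∃ D : ℕ, 0 < D ∧ ∀ x : ℤ, ∃ z : ℤ, (D : ℚ) * p.eval (x : ℚ) = (z : ℚ) := by
  refine ⟨∏ i ∈ p.support, (p.coeff i).den, Finset.prod_pos fun i _ => (p.coeff i).pos, ?_⟩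
  intro x
  rw [Polynomial.eval_eq_sum, Polynomial.sum_def, Finset.mul_sum]
  have : ∀ i ∈ p.support, ∃ z : ℤ,
      ((∏ j ∈ p.support, (p.coeff j).den : ℕ) : ℚ) * (p.coeff i * (x : ℚ) ^ i) = (z : ℚ) := by
    intro i hi
    obtain ⟨z, hz⟩ := aux_den_dvd_int (p.coeff i) (∏ j ∈ p.support, (p.coeff j).den)
      (Finset.dvd_prod_of_mem _ hi)
    exact ⟨z * x ^ i, by rw [← mul_assoc, hz]; push_cast; ring⟩
  choose g hg using this
  refine ⟨∑ i ∈ p.support.attach, g i.1 i.2, ?_⟩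
  rw [Int.cast_sum, ← Finset.sum_attach p.support
    (fun i => ((∏ j ∈ p.support, (p.coeff j).den : ℕ) : ℚ) * (p.coeff i * (x : ℚ) ^ i))]
  exact Finset.sum_congr rfl fun i _ => hg i.1 i.2

/-- A rational function over `ℚ` taking integer values at all the powers `q^r` (`r ≥ 1`)
of an integer `q ≥ 2` (none of which is a pole) is a polynomial. -/
theorem ratfunc_integer_values_at_powers_is_polynomial (f : RatFunc ℚ) (q : ℤ) (hq : 2 ≤ q)
    (h : ∀ r : ℕ, 1 ≤ r →
      Polynomial.eval ((q : ℚ) ^ r) f.denom ≠ 0 ∧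
      ∃ z : ℤ, RatFunc.eval (RingHom.id ℚ) ((q : ℚ) ^ r) f = (z : ℚ)) :
    ∃ p : Polynomial ℚ, f = algebraMap (Polynomial ℚ) (RatFunc ℚ) p := by
  have hmonic : f.denom.Monic := f.monic_denom
  set d := f.denom with hd
  set N := f.num with hN
  set p := N /ₘ d with hp
  set r := N %ₘ d with hr
  have hdiv : r + d * p = N := Polynomial.modByMonic_add_div N d
  have hdeg : r.degree < d.degree := Polynomial.degree_modByMonic_lt N hmonic
  -- It suffices to show r = 0
  suffices hr0 : r = 0 by
    refine ⟨p, ?_⟩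
    have hNdp : N = d * p := by rw [← hdiv, hr0, zero_add]
    have hd0 : algebraMap ℚ[X] (RatFunc ℚ) d ≠ 0 := by
      simpa using (RatFunc.algebraMap_ne_zero f.denom_ne_zero)
    calc f = algebraMap ℚ[X] (RatFunc ℚ) N / algebraMap ℚ[X] (RatFunc ℚ) d :=
          (RatFunc.num_div_denom f).symm
      _ = algebraMap ℚ[X] (RatFunc ℚ) p := by
          rw [hNdp, map_mul, mul_comm, mul_div_assoc, div_self hd0, mul_one]
  -- Clear denominators of p
  obtain ⟨D, hD0, hD⟩ := aux_clear_denoms p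
  -- Key: for n ≥ 1, D * r(q^n)/d(q^n) is an integer
  have hq1 : (1 : ℚ) < (q : ℚ) := by exact_mod_cast lt_of_lt_of_le one_lt_two hq
  have key : ∀ n : ℕ, 1 ≤ n → ∃ t : ℤ,
      (D : ℚ) * (r.eval ((q : ℚ) ^ n) / d.eval ((q : ℚ) ^ n)) = (t : ℚ) := by
    intro n hn
    obtain ⟨hden, z, hz⟩ := h n hn
    obtain ⟨w, hw⟩ := hD (q ^ n)
    have hfeval : RatFunc.eval (RingHom.id ℚ) ((q : ℚ) ^ n) f =
        N.eval ((q : ℚ) ^ n) / d.eval ((q : ℚ) ^ n) := by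
      rfl
    have hNe : N.eval ((q : ℚ) ^ n) =
        r.eval ((q : ℚ) ^ n) + d.eval ((q : ℚ) ^ n) * p.eval ((q : ℚ) ^ n) := by
      rw [← hdiv]; simp
    refine ⟨D * z - w, ?_⟩
    have : r.eval ((q : ℚ) ^ n) / d.eval ((q : ℚ) ^ n) =
        RatFunc.eval (RingHom.id ℚ) ((q : ℚ) ^ n) f - p.eval ((q : ℚ) ^ n) := by
      rw [hfeval, hNe, add_div, mul_div_cancel_left₀ _ hden, add_sub_cancel_right]
    rw [this, hz, mul_sub]
    push_cast at hw ⊢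
    rw [hw]
  -- Convergence to 0 in ℝ
  have hcast : ∀ (s : ℚ[X]) (y : ℚ),
      (s.map (algebraMap ℚ ℝ)).eval ((y : ℝ)) = ((s.eval y : ℚ) : ℝ) := by
    intro s y
    rw [Polynomial.eval_map]
    exact Polynomial.eval₂_at_apply (algebraMap ℚ ℝ) y
  have hd0' : d ≠ 0 := f.denom_ne_zero
  have hdegR : (r.map (algebraMap ℚ ℝ)).degree < (d.map (algebraMap ℚ ℝ)).degree := by
    rw [Polynomial.degree_map, Polynomial.degree_map]
    exact hdeg
  have htend0 : Tendsto (fun x : ℝ =>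
      (r.map (algebraMap ℚ ℝ)).eval x / (d.map (algebraMap ℚ ℝ)).eval x) atTop (nhds 0) :=
    Polynomial.div_tendsto_zero_of_degree_lt _ _ hdegR
  have hqR : (1 : ℝ) < (q : ℝ) := by exact_mod_cast lt_of_lt_of_le one_lt_two hq
  have hpow : Tendsto (fun n : ℕ => ((q : ℝ)) ^ n) atTop atTop :=
    tendsto_pow_atTop_atTop_of_one_lt hqR
  have hseq : Tendsto (fun n : ℕ =>
      (D : ℝ) * ((r.map (algebraMap ℚ ℝ)).eval ((q : ℝ) ^ n) /
        (d.map (algebraMap ℚ ℝ)).eval ((q : ℝ) ^ n))) atTop (nhds 0) := by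
    have := (htend0.comp hpow).const_mul (D : ℝ)
    simpa using this
  -- Eventually the integer values are < 1 in absolute value, hence 0
  have hev : ∀ᶠ n : ℕ in atTop, |(D : ℝ) * ((r.map (algebraMap ℚ ℝ)).eval ((q : ℝ) ^ n) /
      (d.map (algebraMap ℚ ℝ)).eval ((q : ℝ) ^ n))| < 1 := by
    have := hseq.eventually (eventually_abs_sub_lt 0 one_pos)
    simpa using this
  obtain ⟨M, hM⟩ := hev.exists_forall_of_atTop
  -- r vanishes at q^n for all n ≥ max M 1
  have hroot : ∀ n : ℕ, max M 1 ≤ n → r.IsRoot ((q : ℚ) ^ n) := by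
    intro n hn
    have hn1 : 1 ≤ n := le_trans (le_max_right M 1) hn
    have hnM : M ≤ n := le_trans (le_max_left M 1) hn
    obtain ⟨t, ht⟩ := key n hn1
    obtain ⟨hden, -⟩ := h n hn1
    have hcastval : (D : ℝ) * ((r.map (algebraMap ℚ ℝ)).eval ((q : ℝ) ^ n) /
        (d.map (algebraMap ℚ ℝ)).eval ((q : ℝ) ^ n)) = ((t : ℚ) : ℝ) := by
      have e1 : ((q : ℝ)) ^ n = (((q : ℚ) ^ n : ℚ) : ℝ) := by push_cast; ring
      rw [e1, hcast r, hcast d, ← Rat.cast_div, ← ht]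
      push_cast
      ring
    have habs := hM n hnM
    rw [hcastval] at habs
    have ht0 : t = 0 := by
      have : |(t : ℝ)| < 1 := by exact_mod_cast habs
      exact_mod_cast Int.abs_lt_one_iff.mp (by exact_mod_cast this)
    rw [ht0] at ht
    simp only [Int.cast_zero] at ht
    have hD0' : (D : ℚ) ≠ 0 := by exact_mod_cast hD0.ne'
    have : r.eval ((q : ℚ) ^ n) / d.eval ((q : ℚ) ^ n) = 0 :=
      (mul_eq_zero.mp ht).resolve_left hD0'
    have := (div_eq_zero_iff.mp this).resolve_right hden
    exact this
  -- infinitely many roots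
  apply Polynomial.eq_zero_of_infinite_isRoot
  apply Set.infinite_of_injective_forall_mem
    (f := fun k : ℕ => ((q : ℚ)) ^ (max M 1 + k))
  · intro a b hab
    have : max M 1 + a = max M 1 + b := by
      have hmono : StrictMono (fun m : ℕ => ((q : ℚ)) ^ m) :=
        fun _ _ hlt => pow_lt_pow_right₀ hq1 hlt
      exact hmono.injective hab
    omega
  · intro k
    exact hroot (max M 1 + k) (Nat.le_add_right _ _)
end

section
/- Let k be a finite field with q elements and let V be a finite-dimensional k-vector space of dimension m ≥ 1. Then ∑_U (−1)^{dim U}·q^{dim U·(dim U − 1)/2} = 0, where the sum ranges over all k-subspaces U of V (a finite set). -/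
namespace SignedSubspaceSumAux
open LinearMap Finset

variable {k : Type} [Field k] {W M : Type} [AddCommGroup W] [Module k W]
  [AddCommGroup M] [Module k M]

noncomputable def stepEquiv :
    {f : (W × k) →ₗ[k] M // Function.Injective f} ≃
      Σ g : {g : W →ₗ[k] M // Function.Injective g}, {v : M // v ∉ LinearMap.range g.1} where
  toFun f := ⟨⟨f.1 ∘ₗ LinearMap.inl k W k, f.2.comp LinearMap.inl_injective⟩,
    ⟨f.1 (0, 1), by
      rintro ⟨x, hx⟩
      simp only [coe_comp, Function.comp_apply, coe_inl] at hx
      have := f.2 hx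
      simp at this⟩⟩
  invFun p := ⟨p.1.1 ∘ₗ LinearMap.fst k W k + (LinearMap.snd k W k).smulRight p.2.1, by
    rw [injective_iff_map_eq_zero]
    rintro ⟨x, t⟩ h
    simp only [LinearMap.add_apply, coe_comp, Function.comp_apply, fst_apply, smulRight_apply,
      snd_apply] at h
    by_cases ht : t = 0
    · subst ht
      simp only [zero_smul, add_zero] at h
      have : x = 0 := (injective_iff_map_eq_zero _).1 p.1.2 x h
      simp [this, Prod.ext_iff]
    · exfalso
      apply p.2.2
      refine ⟨(-t⁻¹) • x, ?_⟩
      have h2 : t • (p.2.1 : M) = -(p.1.1 x) := by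
        rw [eq_neg_iff_add_eq_zero, add_comm]; exact h
      rw [map_smul, neg_smul, ← smul_neg, ← h2, smul_smul, inv_mul_cancel₀ ht, one_smul]⟩
  left_inv f := by
    refine Subtype.ext (LinearMap.ext ?_)
    rintro ⟨x, t⟩
    simp only [LinearMap.add_apply, coe_comp, Function.comp_apply, fst_apply, smulRight_apply, snd_apply,
      coe_inl]
    rw [← map_smul, ← map_add]
    congr 1
    simp [Prod.ext_iff]
  right_inv p := by
    obtain ⟨⟨g, hg⟩, ⟨v, hv⟩⟩ := p
    have hmap : (g ∘ₗ LinearMap.fst k W k + (LinearMap.snd k W k).smulRight v) ∘ₗ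
        LinearMap.inl k W k = g := by
      ext x; simp
    refine Sigma.ext (Subtype.ext hmap) ((Subtype.heq_iff_coe_eq ?_).2 (by simp))
    intro x
    dsimp only
    rw [hmap]

variable (k M) in
lemma card_inj_congr {W' : Type} [AddCommGroup W'] [Module k W'] (e : W ≃ₗ[k] W') :
    Nat.card {f : W →ₗ[k] M // Function.Injective f} =
      Nat.card {f : W' →ₗ[k] M // Function.Injective f} := by
  refine Nat.card_congr (Equiv.subtypeEquiv (e.arrowCongr (LinearEquiv.refl k M)).toEquiv ?_)
  intro f
  change Function.Injective ⇑f ↔ Function.Injective ⇑((e.arrowCongr (LinearEquiv.refl k M)) f)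
  have : ⇑((e.arrowCongr (LinearEquiv.refl k M)) f) = ⇑f ∘ ⇑e.symm := by
    ext x; simp
  rw [this]
  exact (e.symm.toEquiv.injective_comp ⇑f).symm

lemma card_fiber {n : ℕ} [Fintype k] (g : {g : W →ₗ[k] (Fin n → k) // Function.Injective g})
    [Fintype W] [FiniteDimensional k W] :
    Nat.card {v : Fin n → k // v ∉ LinearMap.range g.1} =
      Fintype.card k ^ n - Fintype.card k ^ Module.finrank k W := by
  classical
  rw [Nat.card_eq_fintype_card, Fintype.card_subtype_compl]
  congr 1
  · simp [Module.card_eq_pow_finrank (K := k) (V := Fin n → k), Module.finrank_pi]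
  · have h2 := Module.card_eq_pow_finrank (K := k) (V := ↥(LinearMap.range g.1))
    rw [LinearMap.finrank_range_of_inj g.2] at h2
    convert h2 using 2

lemma card_inj_pi [Fintype k] (n d : ℕ) :
    (Nat.card {f : (Fin d → k) →ₗ[k] (Fin n → k) // Function.Injective f} : ℤ) =
      ∏ i ∈ Finset.range d, ((Fintype.card k : ℤ) ^ n - (Fintype.card k : ℤ) ^ i) := by
  induction d with
  | zero =>
      haveI : Subsingleton ((Fin 0 → k) →ₗ[k] (Fin n → k)) :=
        ⟨fun f g => LinearMap.ext fun x => by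
          rw [Subsingleton.elim x 0, map_zero, map_zero]⟩
      haveI : Unique {f : (Fin 0 → k) →ₗ[k] (Fin n → k) // Function.Injective f} :=
        ⟨⟨⟨0, fun a b _ => Subsingleton.elim a b⟩⟩, fun f => Subtype.ext (Subsingleton.elim _ _)⟩
      simp [Nat.card_unique]
  | succ d ih =>
      classical
      have e : (Fin (d+1) → k) ≃ₗ[k] ((Fin d → k) × k) :=
        LinearEquiv.ofFinrankEq _ _ (by simp [Module.finrank_pi])
      rw [card_inj_congr k (Fin n → k) e, Nat.card_congr stepEquiv]
      haveI : Finite ((Fin d → k) →ₗ[k] (Fin n → k)) :=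
        Finite.of_injective _ LinearMap.coe_injective
      haveI ftI : Fintype {g : (Fin d → k) →ₗ[k] (Fin n → k) // Function.Injective g} :=
        Fintype.ofFinite _
      haveI : ∀ g : {g : (Fin d → k) →ₗ[k] (Fin n → k) // Function.Injective g},
          Fintype {v : Fin n → k // v ∉ LinearMap.range g.1} := fun g => Fintype.ofFinite _
      rw [Nat.card_eq_fintype_card, Fintype.card_sigma]
      rcases isEmpty_or_nonempty
          {g : (Fin d → k) →ₗ[k] (Fin n → k) // Function.Injective g} with hE | hN
      · have h0 : (Nat.card {g : (Fin d → k) →ₗ[k] (Fin n → k) // Function.Injective g} : ℤ)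
            = 0 := by simp [Nat.card_of_isEmpty]
        rw [Finset.prod_range_succ, ← ih, h0]
        simp
      · have hdn : d ≤ n := by
          obtain ⟨g⟩ := hN
          have := LinearMap.finrank_le_finrank_of_injective g.2
          simpa [Module.finrank_pi] using this
        have hle : Fintype.card k ^ d ≤ Fintype.card k ^ n :=
          Nat.pow_le_pow_right Fintype.card_pos hdn
        have hfib : ∀ g : {g : (Fin d → k) →ₗ[k] (Fin n → k) // Function.Injective g},
            (Fintype.card {v : Fin n → k // v ∉ LinearMap.range g.1} : ℤ) =
              (Fintype.card k : ℤ) ^ n - (Fintype.card k : ℤ) ^ d := by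
          intro g
          rw [← Nat.card_eq_fintype_card, card_fiber g, Nat.cast_sub
            (by simpa [Module.finrank_pi] using hle)]
          simp [Module.finrank_pi]
        push_cast
        rw [Finset.prod_range_succ, ← ih]
        calc (∑ g : {g : (Fin d → k) →ₗ[k] (Fin n → k) // Function.Injective g},
              (Fintype.card {v : Fin n → k // v ∉ LinearMap.range g.1} : ℤ))
            = ∑ _g : {g : (Fin d → k) →ₗ[k] (Fin n → k) // Function.Injective g},
              ((Fintype.card k : ℤ) ^ n - (Fintype.card k : ℤ) ^ d) := by
              exact Finset.sum_congr rfl fun g _ => hfib g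
          _ = (Nat.card {g : (Fin d → k) →ₗ[k] (Fin n → k) // Function.Injective g} : ℤ) *
              ((Fintype.card k : ℤ) ^ n - (Fintype.card k : ℤ) ^ d) := by
              rw [Finset.sum_const, Nat.card_eq_fintype_card]
              simp [mul_comm]

noncomputable def kerFiberEquiv {V : Type} [AddCommGroup V] [Module k V]
    (K : Submodule k V) (n : ℕ) :
    {f : V →ₗ[k] (Fin n → k) // LinearMap.ker f = K} ≃
      {g : (V ⧸ K) →ₗ[k] (Fin n → k) // Function.Injective g} where
  toFun f := ⟨K.liftQ f.1 (le_of_eq f.2.symm), by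
    rw [← LinearMap.ker_eq_bot]
    exact Submodule.ker_liftQ_eq_bot _ _ _ (le_of_eq f.2)⟩
  invFun g := ⟨g.1 ∘ₗ K.mkQ, by
    rw [LinearMap.ker_comp, LinearMap.ker_eq_bot.2 g.2, Submodule.comap_bot,
      Submodule.ker_mkQ]⟩
  left_inv f := Subtype.ext (Submodule.liftQ_mkQ _ _ _)
  right_inv g := by
    refine Subtype.ext (Submodule.linearMap_qext _ ?_)
    exact Submodule.liftQ_mkQ _ _ _

lemma master (V : Type) [AddCommGroup V] [Module k V] [Fintype k] [FiniteDimensional k V]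
    [Fintype (Submodule k V)] (n : ℕ) :
    ((Fintype.card k : ℤ)) ^ (Module.finrank k V * n) =
      ∑ K : Submodule k V, ∏ i ∈ Finset.range (Module.finrank k (V ⧸ K)),
        ((Fintype.card k : ℤ) ^ n - (Fintype.card k : ℤ) ^ i) := by
  classical
  haveI : Finite V := Module.finite_of_finite k
  haveI : Fintype V := Fintype.ofFinite V
  have hcard : (Nat.card (V →ₗ[k] (Fin n → k)) : ℤ) =
      (Fintype.card k : ℤ) ^ (Module.finrank k V * n) := by
    haveI : Finite (V →ₗ[k] (Fin n → k)) := Finite.of_injective _ LinearMap.coe_injective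
    haveI : Fintype (V →ₗ[k] (Fin n → k)) := Fintype.ofFinite _
    rw [Nat.card_eq_fintype_card, Module.card_eq_pow_finrank (K := k), Module.finrank_linearMap,
      Module.finrank_pi, Fintype.card_fin]
    push_cast
    ring
  rw [← hcard]
  haveI : Finite (V →ₗ[k] (Fin n → k)) := Finite.of_injective _ LinearMap.coe_injective
  haveI : Fintype (V →ₗ[k] (Fin n → k)) := Fintype.ofFinite _
  have hsig : Nat.card (V →ₗ[k] (Fin n → k)) =
      ∑ K : Submodule k V, Nat.card {f : V →ₗ[k] (Fin n → k) // LinearMap.ker f = K} := by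
    haveI : ∀ K : Submodule k V,
        Fintype {f : V →ₗ[k] (Fin n → k) // LinearMap.ker f = K} := fun K => Fintype.ofFinite _
    rw [← Nat.card_congr (Equiv.sigmaFiberEquiv (fun f : V →ₗ[k] (Fin n → k) => LinearMap.ker f)),
      Nat.card_eq_fintype_card, Fintype.card_sigma]
    exact Finset.sum_congr rfl fun K _ => (Nat.card_eq_fintype_card).symm
  rw [hsig]
  push_cast
  refine Finset.sum_congr rfl fun K _ => ?_
  have e2 : (V ⧸ K) ≃ₗ[k] (Fin (Module.finrank k (V ⧸ K)) → k) :=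
    LinearEquiv.ofFinrankEq _ _ (by simp [Module.finrank_pi])
  rw [Nat.card_congr (kerFiberEquiv K n), card_inj_congr k (Fin n → k) e2, card_inj_pi]

lemma reindex (V : Type) [AddCommGroup V] [Module k V] [Fintype k] [FiniteDimensional k V]
    [Fintype (Submodule k V)] (F : ℕ → ℤ) :
    ∑ K : Submodule k V, F (Module.finrank k (V ⧸ K)) =
      ∑ U : Submodule k V, F (Module.finrank k U) := by
  classical
  haveI : Finite (Module.Dual k V) := Module.finite_of_finite k
  haveI : Fintype (Submodule k (Module.Dual k V)) := Fintype.ofFinite _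
  have eD : Module.Dual k V ≃ₗ[k] V := LinearEquiv.ofFinrankEq _ _ Subspace.dual_finrank_eq
  calc ∑ K : Submodule k V, F (Module.finrank k (V ⧸ K))
      = ∑ U : Submodule k (Module.Dual k V), F (Module.finrank k U) := by
        refine Fintype.sum_equiv
          ((Subspace.orderIsoFiniteDimensional (K := k) (V := V)).toEquiv.trans
            OrderDual.ofDual) _ _ fun K => ?_
        have h : (((Subspace.orderIsoFiniteDimensional (K := k) (V := V)).toEquiv.trans
            OrderDual.ofDual) K) = K.dualAnnihilator := rfl
        rw [h]
        exact congrArg F (LinearEquiv.finrank_eq (Subspace.quotEquivAnnihilator K))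
    _ = ∑ U : Submodule k V, F (Module.finrank k U) := by
        refine Fintype.sum_equiv (Submodule.orderIsoMapComap eD).toEquiv _ _ fun U => ?_
        have h : ((Submodule.orderIsoMapComap eD).toEquiv U : Submodule k V) =
            Submodule.map (eD : Module.Dual k V →ₗ[k] V) U := Submodule.orderIsoMapComap_apply eD U
        rw [h]
        exact congrArg F (LinearEquiv.finrank_map_eq eD U).symm

end SignedSubspaceSumAux
open SignedSubspaceSumAux

/-- For a vector space `V` of dimension `m ≥ 1` over a finite field `k` with `q`
elements, the signed sum `∑_U (-1)^(dim U) q^(dim U (dim U - 1)/2)` over all subspaces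
`U` of `V` (a finite set) vanishes. -/
theorem signed_subspace_sum_eq_zero (k V : Type) [Field k] [Fintype k] [AddCommGroup V]
    [Module k V] [FiniteDimensional k V] (hm : 1 ≤ Module.finrank k V) :
    ∑ᶠ U : Submodule k V,
      ((-1 : ℤ) ^ (Module.finrank k U) *
        (Fintype.card k : ℤ) ^ (Module.finrank k U * (Module.finrank k U - 1) / 2)) = 0 := by
  classical
  haveI : Finite V := Module.finite_of_finite k
  haveI : Finite (Submodule k V) :=
    Finite.of_injective (fun K : Submodule k V => (K : Set V)) SetLike.coe_injective
  haveI : Fintype (Submodule k V) := Fintype.ofFinite _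
  rw [finsum_eq_sum_of_fintype]
  set q : ℤ := (Fintype.card k : ℤ) with hq
  set m := Module.finrank k V with hmdef
  set P : Polynomial ℤ :=
    Polynomial.X ^ m - ∑ U : Submodule k V,
      ∏ i ∈ Finset.range (Module.finrank k U), (Polynomial.X - Polynomial.C (q ^ i)) with hP
  have heval : ∀ n : ℕ, P.eval (q ^ n) = 0 := by
    intro n
    have h1 := master (k := k) V n
    have h2 : ∑ K : Submodule k V,
          (fun d => ∏ i ∈ Finset.range d, (q ^ n - q ^ i)) (Module.finrank k (V ⧸ K)) =
        ∑ U : Submodule k V,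
          (fun d => ∏ i ∈ Finset.range d, (q ^ n - q ^ i)) (Module.finrank k U) :=
      reindex (k := k) V (fun d => ∏ i ∈ Finset.range d, (q ^ n - q ^ i))
    simp only at h2
    rw [hP]
    simp only [Polynomial.eval_sub, Polynomial.eval_pow, Polynomial.eval_X,
      Polynomial.eval_finset_sum, Polynomial.eval_prod, Polynomial.eval_C]
    rw [← pow_mul, Nat.mul_comm n m, sub_eq_zero, ← hq] at *
    rw [h1, h2]
  have hq1 : (1 : ℤ) < q := by
    rw [hq]; exact_mod_cast Fintype.one_lt_card
  have hinj : Function.Injective fun n : ℕ => q ^ n := (pow_right_strictMono₀ hq1).injective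
  have hinf : {x : ℤ | P.IsRoot x}.Infinite :=
    Set.infinite_of_injective_forall_mem hinj fun n => heval n
  have hP0 : P = 0 := Polynomial.eq_zero_of_infinite_isRoot P hinf
  have hev0 : P.eval 0 = 0 := by rw [hP0]; simp
  rw [hP] at hev0
  simp only [Polynomial.eval_sub, Polynomial.eval_pow, Polynomial.eval_X,
    Polynomial.eval_finset_sum, Polynomial.eval_prod, Polynomial.eval_C] at hev0
  rw [zero_pow (by omega), zero_sub, neg_eq_zero] at hev0
  have key : ∀ d : ℕ, ∏ i ∈ Finset.range d, ((0:ℤ) - q ^ i) = (-1) ^ d * q ^ (d * (d - 1) / 2) := by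
    intro d
    calc ∏ i ∈ Finset.range d, ((0:ℤ) - q ^ i)
        = ∏ i ∈ Finset.range d, (-1 * q ^ i) :=
          Finset.prod_congr rfl fun i _ => by ring
      _ = (-1) ^ d * ∏ i ∈ Finset.range d, q ^ i := by
          rw [Finset.prod_mul_distrib, Finset.prod_const, Finset.card_range]
      _ = (-1) ^ d * q ^ (d * (d - 1) / 2) := by
          rw [Finset.prod_pow_eq_pow_sum, Finset.sum_range_id]
  calc ∑ U : Submodule k V, ((-1 : ℤ) ^ (Module.finrank k U) *
        q ^ (Module.finrank k U * (Module.finrank k U - 1) / 2))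
      = ∑ U : Submodule k V,
          ∏ i ∈ Finset.range (Module.finrank k U), ((0:ℤ) - q ^ i) :=
        Finset.sum_congr rfl fun U _ => (key _).symm
    _ = 0 := hev0
end

section
/- Let R be a commutative ring and let (a_d)_{d≥1} be elements of R. The formal power series f = 1 + ∑_{d≥1} a_d·t^d ∈ R[[t]] is invertible, and for every n ≥ 0 the coefficient of t^n in f^{-1} equals ∑_λ (−1)^{ℓ(λ)}·(ℓ(λ)! / ∏_{i≥1} m_i(λ)!)·∏_{i} a_{λ_i}, where the sum ranges over all partitions λ = (λ_1, λ_2, …) of n, ℓ(λ) denotes the number of parts of λ, m_i(λ) denotes the number of parts of λ equal to i, the product ∏_i a_{λ_i} ranges over all parts of λ, and the multinomial coefficient ℓ(λ)!/∏_i m_i(λ)! is the integer acting on R via the canonical map ℤ → R. -/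
open Finset Multiset

set_option maxHeartbeats 1000000

/-- The multinomial weight of a multiset. -/
private def multW (m : Multiset ℕ) : ℕ :=
  Nat.factorial (Multiset.card m) / ∏ i ∈ m.toFinset, Nat.factorial (m.count i)

private lemma multW_eq (m : Multiset ℕ) :
    multW m = Nat.multinomial m.toFinset m.count := by
  rw [Nat.multinomial, multW, Multiset.toFinset_sum_count_eq]

private lemma multW_spec (m : Multiset ℕ) :
    (∏ i ∈ m.toFinset, Nat.factorial (m.count i)) * multW m =
      Nat.factorial (Multiset.card m) := by
  rw [multW_eq, ← Multiset.toFinset_sum_count_eq m]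
  exact Nat.multinomial_spec _ _

private lemma prod_count_erase {m : Multiset ℕ} {d : ℕ} (hd : d ∈ m) :
    ∏ i ∈ m.toFinset, Nat.factorial (m.count i) =
      m.count d * ∏ i ∈ (m.erase d).toFinset, Nat.factorial ((m.erase d).count i) := by
  have hdf : d ∈ m.toFinset := Multiset.mem_toFinset.mpr hd
  have h1 : ∏ i ∈ (m.erase d).toFinset, Nat.factorial ((m.erase d).count i)
      = ∏ i ∈ m.toFinset, Nat.factorial ((m.erase d).count i) := by
    refine Finset.prod_subset (Multiset.toFinset_subset.mpr (Multiset.erase_subset d m)) ?_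
    intro x _ hx'
    rw [Multiset.count_eq_zero.mpr (fun h => hx' (Multiset.mem_toFinset.mpr h))]
    rfl
  rw [h1, ← Finset.mul_prod_erase _ _ hdf,
    ← Finset.mul_prod_erase _ (fun i => Nat.factorial ((m.erase d).count i)) hdf]
  have h2 : ∀ i ∈ m.toFinset.erase d,
      Nat.factorial ((m.erase d).count i) = Nat.factorial (m.count i) := by
    intro i hi
    rw [Multiset.count_erase_of_ne (Finset.ne_of_mem_erase hi)]
  rw [Finset.prod_congr rfl h2, Multiset.count_erase_self, ← mul_assoc,
    Nat.mul_factorial_pred (Multiset.count_pos.mpr hd).ne']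

private lemma multW_erase_mul {m : Multiset ℕ} {d : ℕ} (hd : d ∈ m) :
    multW (m.erase d) * ∏ i ∈ m.toFinset, Nat.factorial (m.count i) =
      m.count d * Nat.factorial (Multiset.card m - 1) := by
  rw [prod_count_erase hd, mul_left_comm, mul_comm (multW _), multW_spec,
    Multiset.card_erase_of_mem hd]
  rfl

private lemma sum_multW_erase {m : Multiset ℕ} (hm : m ≠ 0) :
    ∑ d ∈ m.toFinset, multW (m.erase d) = multW m := by
  have hP : 0 < ∏ i ∈ m.toFinset, Nat.factorial (m.count i) :=
    Finset.prod_pos fun i _ => Nat.factorial_pos _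
  refine Nat.eq_of_mul_eq_mul_right hP ?_
  rw [Finset.sum_mul, mul_comm (multW m), multW_spec]
  calc ∑ d ∈ m.toFinset, multW (m.erase d) * ∏ i ∈ m.toFinset, Nat.factorial (m.count i)
      = ∑ d ∈ m.toFinset, m.count d * Nat.factorial (Multiset.card m - 1) :=
        Finset.sum_congr rfl fun d hd => multW_erase_mul (Multiset.mem_toFinset.mp hd)
    _ = (∑ d ∈ m.toFinset, m.count d) * Nat.factorial (Multiset.card m - 1) := by
        rw [Finset.sum_mul]
    _ = Multiset.card m * Nat.factorial (Multiset.card m - 1) := by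
        rw [Multiset.toFinset_sum_count_eq]
    _ = Nat.factorial (Multiset.card m) :=
        Nat.mul_factorial_pred (Multiset.card_pos.mpr hm).ne'

/-- The partition-indexed summand. -/
private def Fw {R : Type} [CommRing R] (a : ℕ → R) (m : Multiset ℕ) : R :=
  (-1 : R) ^ (Multiset.card m) * (multW m : R) * (m.map a).prod

private lemma Fw_zero {R : Type} [CommRing R] (a : ℕ → R) : Fw a 0 = 1 := by
  simp [Fw, multW]

private lemma g_zero {R : Type} [CommRing R] (a : ℕ → R) :
    (∑ p : Nat.Partition 0, Fw a p.parts) = 1 := by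
  rw [Finset.univ_unique, Finset.sum_singleton]
  rw [Nat.Partition.partition_zero_parts, Fw_zero]

private lemma partition_heq {m k : ℕ} (h : m = k) {p : Nat.Partition m} {q : Nat.Partition k}
    (hp : p.parts = q.parts) : HEq p q := by
  subst h
  exact heq_of_eq (Nat.Partition.ext hp)

/-- map from the `((i,j), q)` data to the `(p, d)` data. -/
private def toA {n : ℕ} (x : Σ ij : ℕ × ℕ, Nat.Partition ij.2) (hx : x.1.1 + x.1.2 = n) :
    Σ _ : Nat.Partition (n + 1), ℕ :=
  ⟨⟨(x.1.1 + 1) ::ₘ x.2.parts, by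
      intro i hi
      rcases Multiset.mem_cons.mp hi with h | h
      · omega
      · exact x.2.parts_pos h, by
      rw [Multiset.sum_cons, x.2.parts_sum]; omega⟩, x.1.1 + 1⟩

/-- map from the `(p, d)` data to the `((i,j), q)` data. -/
private def toB {n : ℕ} (y : Σ _ : Nat.Partition (n + 1), ℕ) (hy : y.2 ∈ y.1.parts) :
    Σ ij : ℕ × ℕ, Nat.Partition ij.2 :=
  ⟨(y.2 - 1, n + 1 - y.2),
    ⟨y.1.parts.erase y.2, fun hi => y.1.parts_pos (Multiset.mem_of_mem_erase hi), by
      have h2 : y.2 + (y.1.parts.erase y.2).sum = n + 1 := by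
        rw [← Multiset.sum_cons, Multiset.cons_erase hy, y.1.parts_sum]
      omega⟩⟩

private lemma sum_in_parts {n : ℕ} (p : Nat.Partition (n + 1)) {d : ℕ} (hd : d ∈ p.parts) :
    d + (p.parts.erase d).sum = n + 1 := by
  rw [← Multiset.sum_cons, Multiset.cons_erase hd, p.parts_sum]

private lemma g_rec {R : Type} [CommRing R] (a : ℕ → R) (n : ℕ) :
    (∑ p : Nat.Partition (n + 1), Fw a p.parts) =
      - ∑ ij ∈ Finset.HasAntidiagonal.antidiagonal n, a (ij.1 + 1) *
          ∑ q : Nat.Partition ij.2, Fw a q.parts := by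
  have hL : ∀ p : Nat.Partition (n + 1), Fw a p.parts =
      ∑ d ∈ p.parts.toFinset, (-1 : R) ^ (Multiset.card p.parts) *
        (multW (p.parts.erase d) : R) * (p.parts.map a).prod := by
    intro p
    have hne : p.parts ≠ 0 := by
      intro h
      have := p.parts_sum
      rw [h] at this
      simp at this
    rw [Fw, ← sum_multW_erase hne, Nat.cast_sum, Finset.mul_sum, Finset.sum_mul]
  calc (∑ p : Nat.Partition (n + 1), Fw a p.parts)
      = ∑ p : Nat.Partition (n + 1), ∑ d ∈ p.parts.toFinset,
          (-1 : R) ^ (Multiset.card p.parts) * (multW (p.parts.erase d) : R) *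
            (p.parts.map a).prod := Finset.sum_congr rfl fun p _ => hL p
    _ = ∑ y ∈ (Finset.univ : Finset (Nat.Partition (n + 1))).sigma (fun p => p.parts.toFinset),
          (-1 : R) ^ (Multiset.card y.1.parts) * (multW (y.1.parts.erase y.2) : R) *
            (y.1.parts.map a).prod := Finset.sum_sigma' _ _ _
    _ = ∑ x ∈ (Finset.HasAntidiagonal.antidiagonal n).sigma
          (fun ij => (Finset.univ : Finset (Nat.Partition ij.2))),
          -(a (x.1.1 + 1) * Fw a x.2.parts) := by
        refine Finset.sum_bij'
          (fun y hy => toB y (Multiset.mem_toFinset.mp (Finset.mem_sigma.mp hy).2))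
          (fun x hx => toA x (Finset.HasAntidiagonal.mem_antidiagonal.mp (Finset.mem_sigma.mp hx).1))
          ?_ ?_ ?_ ?_ ?_
        · -- maps into the target finset
          rintro ⟨p, d⟩ hy
          have hd : d ∈ p.parts := Multiset.mem_toFinset.mp (Finset.mem_sigma.mp hy).2
          have h2 := sum_in_parts p hd
          have h3 : 1 ≤ d := p.parts_pos hd
          refine Finset.mem_sigma.mpr ⟨Finset.HasAntidiagonal.mem_antidiagonal.mpr ?_, Finset.mem_univ _⟩
          show d - 1 + (n + 1 - d) = n
          omega
        · -- maps into the source finset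
          rintro ⟨ij, q⟩ hx
          exact Finset.mem_sigma.mpr ⟨Finset.mem_univ _,
            Multiset.mem_toFinset.mpr (Multiset.mem_cons_self _ _)⟩
        · -- left inverse
          rintro ⟨p, d⟩ hy
          have hd : d ∈ p.parts := Multiset.mem_toFinset.mp (Finset.mem_sigma.mp hy).2
          have h3 : 1 ≤ d := p.parts_pos hd
          refine Sigma.ext (Nat.Partition.ext ?_) (heq_of_eq ?_)
          · show (d - 1 + 1) ::ₘ p.parts.erase d = p.parts
            rw [Nat.sub_add_cancel h3, Multiset.cons_erase hd]
          · show d - 1 + 1 = d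
            omega
        · -- right inverse
          rintro ⟨⟨i, j⟩, q⟩ hx
          have hij : i + j = n := Finset.HasAntidiagonal.mem_antidiagonal.mp (Finset.mem_sigma.mp hx).1
          dsimp only [toA, toB]
          refine Sigma.ext (Prod.ext (by show i + 1 - 1 = i; omega) (by show n + 1 - (i + 1) = j; omega))
            (partition_heq (by show n + 1 - (i + 1) = j; omega) (Multiset.erase_cons_head _ _))
        · -- summand equality
          rintro ⟨p, d⟩ hy
          have hd : d ∈ p.parts := Multiset.mem_toFinset.mp (Finset.mem_sigma.mp hy).2
          have h3 : 1 ≤ d := p.parts_pos hd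
          show (-1 : R) ^ (Multiset.card p.parts) * (multW (p.parts.erase d) : R) *
              (p.parts.map a).prod = -(a (d - 1 + 1) * Fw a (p.parts.erase d))
          rw [Nat.sub_add_cancel h3, Fw]
          have hcard : Multiset.card p.parts = Multiset.card (p.parts.erase d) + 1 := by
            have h0 : 0 < Multiset.card p.parts := Multiset.card_pos.mpr (by
              intro h0
              rw [h0] at hd
              exact absurd hd (Multiset.notMem_zero d))
            rw [Multiset.card_erase_of_mem hd, Nat.pred_eq_sub_one]
            omega
          have hprod : (p.parts.map a).prod = a d * ((p.parts.erase d).map a).prod := by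
            conv_lhs => rw [← Multiset.cons_erase hd]
            rw [Multiset.map_cons, Multiset.prod_cons]
          rw [hcard, hprod, pow_succ]
          ring
    _ = - ∑ x ∈ (Finset.HasAntidiagonal.antidiagonal n).sigma
          (fun ij => (Finset.univ : Finset (Nat.Partition ij.2))),
          a (x.1.1 + 1) * Fw a x.2.parts := by rw [Finset.sum_neg_distrib]
    _ = - ∑ ij ∈ Finset.HasAntidiagonal.antidiagonal n, a (ij.1 + 1) *
          ∑ q : Nat.Partition ij.2, Fw a q.parts := by
        rw [Finset.sum_sigma]
        simp [Finset.mul_sum]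

/-- The power series `f = 1 + ∑_{d ≥ 1} a_d t^d` over a commutative ring is invertible,
and the `n`-th coefficient of its inverse is
`∑_λ (-1)^(ℓ(λ)) (ℓ(λ)!/∏_i m_i(λ)!) ∏_i a_{λ_i}`, summed over all partitions `λ` of `n`. -/
theorem coeff_inverse_powerSeries_partitions (R : Type) [CommRing R] (a : ℕ → R) :
    ∃ g : PowerSeries R,
      (PowerSeries.mk fun d => if d = 0 then 1 else a d) * g = 1 ∧
      ∀ n : ℕ, PowerSeries.coeff n g =
        ∑ p : Nat.Partition n,
          (-1 : R) ^ (Multiset.card p.parts) *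
            ((Nat.factorial (Multiset.card p.parts) /
              ∏ i ∈ p.parts.toFinset, Nat.factorial (p.parts.count i) : ℕ) : R) *
            (p.parts.map a).prod := by
  refine ⟨PowerSeries.mk (fun n => ∑ p : Nat.Partition n, Fw a p.parts), ?_, ?_⟩
  · ext n
    rw [PowerSeries.coeff_mul, PowerSeries.coeff_one]
    simp only [PowerSeries.coeff_mk]
    cases n with
    | zero =>
      simp [g_zero, Fw_zero]
    | succ n =>
      rw [Finset.Nat.sum_antidiagonal_succ]
      simp only [Nat.succ_ne_zero, if_false, ite_true, eq_self_iff_true, one_mul, if_true]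
      rw [g_rec a n]
      ring
  · intro n
    rw [PowerSeries.coeff_mk]
    simp only [Fw, multW]
end

section
/- Let k ⊆ K be an extension of finite fields, Q a finite quiver, Θ a stability, and M a k-representation of Q of nonzero dimension vector. Then M is semistable if and only if the base change K ⊗ M is semistable. -/
/-- A finite quiver: a finite set of vertices, a finite set of arrows,
each with a source and a target vertex. -/
structure FinQuiver where
  V : Type
  A : Type
  [fintypeV : Fintype V]
  [fintypeA : Fintype A]
  src : A → V
  tgt : A → V

attribute [instance] FinQuiver.fintypeV FinQuiver.fintypeA

namespace FinQuiver

/-- A `k`-representation of `Q` of dimension vector `d`: a matrix for every arrow. -/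
def Rep (Q : FinQuiver) (k : Type) [Field k] (d : Q.V → ℕ) : Type :=
  ∀ a : Q.A, Matrix (Fin (d (Q.tgt a))) (Fin (d (Q.src a))) k

variable {Q : FinQuiver}

/-- A family of subspaces is a subrepresentation if it is stable under all arrow maps. -/
def IsSubrep {k : Type} [Field k] {d : Q.V → ℕ} (M : Q.Rep k d)
    (U : ∀ i : Q.V, Submodule k (Fin (d i) → k)) : Prop :=
  ∀ a : Q.A, ∀ x ∈ U (Q.src a), (M a).mulVec x ∈ U (Q.tgt a)

/-- The dimension vector of a family of subspaces. -/
noncomputable def dimVec {k : Type} [Field k] {d : Q.V → ℕ}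
    (U : ∀ i : Q.V, Submodule k (Fin (d i) → k)) : Q.V → ℕ :=
  fun i => Module.finrank k (U i)

/-- The slope of a dimension vector with respect to a stability `Θ`. -/
def slope (Θ : Q.V → ℤ) (e : Q.V → ℕ) : ℚ :=
  ((∑ i, Θ i * e i : ℤ) : ℚ) / ((∑ i, e i : ℕ) : ℚ)

/-- A representation is semistable if all proper nonzero subrepresentations have
slope at most the slope of the representation. -/
def Semistable {k : Type} [Field k] (Θ : Q.V → ℤ) {d : Q.V → ℕ} (M : Q.Rep k d) : Prop :=
  ∀ U : ∀ i : Q.V, Submodule k (Fin (d i) → k), IsSubrep M U →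
    U ≠ (fun _ => ⊥) → U ≠ (fun _ => ⊤) → slope Θ (dimVec U) ≤ slope Θ d

/-- A representation is stable if all proper nonzero subrepresentations have
slope strictly less than the slope of the representation. -/
def Stable {k : Type} [Field k] (Θ : Q.V → ℤ) {d : Q.V → ℕ} (M : Q.Rep k d) : Prop :=
  ∀ U : ∀ i : Q.V, Submodule k (Fin (d i) → k), IsSubrep M U →
    U ≠ (fun _ => ⊥) → U ≠ (fun _ => ⊤) → slope Θ (dimVec U) < slope Θ d

/-- Isomorphism of representations: a family of linear isomorphisms intertwining
the arrow maps. For representations of equal dimension vector this is the usual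
notion of isomorphism via tuples of invertible matrices. -/
def Iso {k : Type} [Field k] {d e : Q.V → ℕ} (M : Q.Rep k d) (N : Q.Rep k e) : Prop :=
  ∃ g : ∀ i : Q.V, (Fin (d i) → k) ≃ₗ[k] (Fin (e i) → k),
    ∀ a : Q.A, ∀ x : Fin (d (Q.src a)) → k,
      g (Q.tgt a) ((M a).mulVec x) = (N a).mulVec (g (Q.src a) x)

/-- Base change of a representation along a field embedding (entrywise application). -/
def mapRep {k K : Type} [Field k] [Field K] (φ : k →+* K) {d : Q.V → ℕ}
    (M : Q.Rep k d) : Q.Rep K d :=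
  fun a => (M a).map φ

/-- A representation over a finite field is absolutely stable if all its base changes
to finite extension fields are stable. -/
def AbsStable {k : Type} [Field k] (Θ : Q.V → ℤ) {d : Q.V → ℕ} (M : Q.Rep k d) : Prop :=
  ∀ (K : Type) [Field K] [Fintype K] (φ : k →+* K), Stable Θ (mapRep φ M)

/-- The number of isomorphism classes of representations of `Q` over `k` of dimension
vector `d` satisfying the property `P`. -/
noncomputable def numClasses (Q : FinQuiver) (k : Type) [Field k] (d : Q.V → ℕ)
    (P : Q.Rep k d → Prop) : ℕ :=
  Nat.card (Quot (fun (M N : {M : Q.Rep k d // P M}) => Iso M.1 N.1))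

/-- Direct sum of two representations (block-diagonal matrices). -/
def dsum {k : Type} [Field k] {d e : Q.V → ℕ} (M : Q.Rep k d) (N : Q.Rep k e) :
    Q.Rep k (d + e) :=
  fun a => Matrix.reindex finSumFinEquiv finSumFinEquiv (Matrix.fromBlocks (M a) 0 0 (N a))

/-- `n`-fold direct sum of representations with a common dimension vector. -/
def dsumMany {k : Type} [Field k] {e : Q.V → ℕ} (n : ℕ) (S : Fin n → Q.Rep k e) :
    Q.Rep k (fun i => n * e i) :=
  fun a => Matrix.of fun x y =>
    let xp := finProdFinEquiv.symm x
    let yp := finProdFinEquiv.symm y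
    if xp.1 = yp.1 then S xp.1 a xp.2 yp.2 else 0

/-- The sum of a finite family of dimension vectors. -/
def sumDims : (n : ℕ) → (Fin n → Q.V → ℕ) → (Q.V → ℕ)
  | 0, _ => 0
  | n + 1, e => e 0 + sumDims n (fun l => e l.succ)

/-- Direct sum of a finite family of representations of varying dimension vectors. -/
def dsumFam {k : Type} [Field k] :
    (n : ℕ) → (e : Fin n → Q.V → ℕ) → (S : ∀ l : Fin n, Q.Rep k (e l)) →
      Q.Rep k (sumDims n e)
  | 0, _, _ => fun _ => Matrix.of fun x _ => x.elim0
  | n + 1, e, S => dsum (S 0) (dsumFam n (fun l => e l.succ) (fun l => S l.succ))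

/-- `IsoDirSumOf P M` holds iff `M` is isomorphic to a finite direct sum of
representations satisfying `P`. -/
inductive IsoDirSumOf {k : Type} [Field k] (P : ∀ {e : Q.V → ℕ}, Q.Rep k e → Prop) :
    ∀ {d : Q.V → ℕ}, Q.Rep k d → Prop
  | base {d : Q.V → ℕ} (M : Q.Rep k d) : P M → IsoDirSumOf P M
  | sum {d e : Q.V → ℕ} (M : Q.Rep k d) (N : Q.Rep k e) :
      IsoDirSumOf P M → IsoDirSumOf P N → IsoDirSumOf P (dsum M N)
  | iso {d : Q.V → ℕ} (M N : Q.Rep k d) : IsoDirSumOf P M → Iso M N → IsoDirSumOf P N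

/-- A representation is polystable of slope `μ` if it is isomorphic to a finite direct
sum of stable representations of slope `μ`. -/
def Polystable {k : Type} [Field k] (Θ : Q.V → ℤ) (μ : ℚ) {d : Q.V → ℕ}
    (M : Q.Rep k d) : Prop :=
  IsoDirSumOf (fun {e} X => Stable Θ X ∧ e ≠ 0 ∧ slope Θ e = μ) M

/-- The endomorphism algebra of a representation, as a subalgebra of the product of
matrix algebras at the vertices. -/
def EndAlg {k : Type} [Field k] {d : Q.V → ℕ} (M : Q.Rep k d) :
    Subalgebra k (∀ i : Q.V, Matrix (Fin (d i)) (Fin (d i)) k) where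
  carrier := {f | ∀ a : Q.A, f (Q.tgt a) * M a = M a * f (Q.src a)}
  mul_mem' := by
    intro f g hf hg a
    show f (Q.tgt a) * g (Q.tgt a) * M a = M a * (f (Q.src a) * g (Q.src a))
    rw [Matrix.mul_assoc, hg a, ← Matrix.mul_assoc, hf a, Matrix.mul_assoc]
  add_mem' := by
    intro f g hf hg a
    simp only [Pi.add_apply, Matrix.add_mul, Matrix.mul_add, hf a, hg a]
  algebraMap_mem' := by
    intro c a
    simp [Pi.algebraMap_apply, Algebra.algebraMap_eq_smul_one]
end FinQuiver

section Aux

open FinQuiver Module Submodule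

variable {Q : FinQuiver}

/-- Flipping a doubly-indexed family of module elements, as a linear equivalence. -/
private def flipLE (R : Type*) {α β M : Type*} [Semiring R] [AddCommMonoid M] [Module R M] :
    (α → β → M) ≃ₗ[R] (β → α → M) where
  toFun x b a := x a b
  invFun x a b := x b a
  map_add' _ _ := rfl
  map_smul' _ _ := rfl
  left_inv _ := rfl
  right_inv _ := rfl

private lemma lin_eq (Θ : Q.V → ℤ) (d e : Q.V → ℕ) :
    (∑ i, ((∑ j, (d j : ℤ)) * Θ i - (∑ j, Θ j * (d j : ℤ))) * (e i : ℤ))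
      = (∑ j, (d j : ℤ)) * (∑ i, Θ i * (e i : ℤ))
        - (∑ j, Θ j * (d j : ℤ)) * (∑ i, (e i : ℤ)) := by
  rw [Finset.mul_sum, Finset.mul_sum, ← Finset.sum_sub_distrib]
  exact Finset.sum_congr rfl fun i _ => by ring

private lemma slope_le_iff (Θ : Q.V → ℤ) {d e : Q.V → ℕ}
    (hd : 0 < ∑ i, d i) (he : 0 < ∑ i, e i) :
    slope Θ e ≤ slope Θ d ↔
      (∑ i, ((∑ j, (d j : ℤ)) * Θ i - (∑ j, Θ j * (d j : ℤ))) * (e i : ℤ)) ≤ 0 := by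
  rw [lin_eq, sub_nonpos]
  have h1 : (0 : ℚ) < ((∑ i, e i : ℕ) : ℚ) := by exact_mod_cast he
  have h2 : (0 : ℚ) < ((∑ i, d i : ℕ) : ℚ) := by exact_mod_cast hd
  rw [FinQuiver.slope, FinQuiver.slope, div_le_div_iff₀ h1 h2,
    mul_comm (∑ j, (d j : ℤ)) (∑ i, Θ i * (e i : ℤ))]
  push_cast
  constructor <;> intro hh <;> exact_mod_cast hh

private lemma sum_dim_pos {k : Type} [Field k] {d : Q.V → ℕ}
    (U : ∀ i : Q.V, Submodule k (Fin (d i) → k)) (hU : U ≠ (fun _ => ⊥)) :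
    0 < ∑ i, Module.finrank k (U i) := by
  rcases Nat.eq_zero_or_pos (∑ i, Module.finrank k (U i)) with h | h
  · exfalso
    apply hU
    funext i
    have := Finset.sum_eq_zero_iff.mp h i (Finset.mem_univ i)
    exact Submodule.finrank_eq_zero.mp this
  · exact h

/-- Semistability reformulated as a single linear inequality over all
subrepresentations, with no nontriviality side conditions. -/
private lemma semistable_iff_lin {k : Type} [Field k] (Θ : Q.V → ℤ) {d : Q.V → ℕ}
    (hd : d ≠ 0) (M : Q.Rep k d) :
    Semistable Θ M ↔ ∀ U : ∀ i : Q.V, Submodule k (Fin (d i) → k), IsSubrep M U →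
      (∑ i, ((∑ j, (d j : ℤ)) * Θ i - (∑ j, Θ j * (d j : ℤ)))
        * (Module.finrank k (U i) : ℤ)) ≤ 0 := by
  have hd' : 0 < ∑ i, d i := by
    rcases Nat.eq_zero_or_pos (∑ i, d i) with h | h
    · exact absurd (funext fun i => Finset.sum_eq_zero_iff.mp h i (Finset.mem_univ i) : d = 0) hd
    · exact h
  constructor
  · intro hss U hU
    by_cases hbot : U = (fun _ => ⊥)
    · subst hbot
      simp [finrank_bot]
    by_cases htop : U = (fun _ => ⊤)
    · subst htop
      have he : ∀ i : Q.V, Module.finrank k (⊤ : Submodule k (Fin (d i) → k)) = d i := by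
        intro i
        rw [finrank_top, Module.finrank_pi, Fintype.card_fin]
      calc (∑ i, ((∑ j, (d j : ℤ)) * Θ i - (∑ j, Θ j * (d j : ℤ)))
              * ((Module.finrank k (⊤ : Submodule k (Fin (d i) → k)) : ℕ) : ℤ))
          = (∑ i, ((∑ j, (d j : ℤ)) * Θ i - (∑ j, Θ j * (d j : ℤ))) * (d i : ℤ)) := by
            exact Finset.sum_congr rfl fun i _ => by rw [he]
        _ ≤ 0 := by rw [lin_eq]; rw [mul_comm]; simp
    · have h2 : slope Θ (fun i => Module.finrank k (U i)) ≤ slope Θ d :=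
        hss U hU hbot htop
      exact (slope_le_iff Θ hd' (sum_dim_pos U hbot)).mp h2
  · intro h U hU hbot htop
    show slope Θ (fun i => Module.finrank k (U i)) ≤ slope Θ d
    exact (slope_le_iff Θ hd' (sum_dim_pos U hbot)).mpr (h U hU)

private lemma finrank_map_add {k V W : Type*} [Field k] [AddCommGroup V] [Module k V]
    [AddCommGroup W] [Module k W] [FiniteDimensional k V]
    (f : V →ₗ[k] W) (p : Submodule k V) :
    Module.finrank k (Submodule.map f p) + Module.finrank k ↥(p ⊓ LinearMap.ker f)
      = Module.finrank k p := by
  have h := LinearMap.finrank_range_add_finrank_ker (f.comp p.subtype)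
  rw [LinearMap.range_comp, Submodule.range_subtype, LinearMap.ker_comp] at h
  have e1 : Submodule.comap p.subtype (LinearMap.ker f)
      = Submodule.comap p.subtype (p ⊓ LinearMap.ker f) := by
    rw [Submodule.comap_inf, Submodule.comap_subtype_self, top_inf_eq]
  rw [e1, LinearEquiv.finrank_eq (Submodule.comapSubtypeEquivOfLe
    (inf_le_left : p ⊓ LinearMap.ker f ≤ p))] at h
  exact h

private lemma finrank_map_disjoint {k V W : Type*} [Field k] [AddCommGroup V] [Module k V]
    [AddCommGroup W] [Module k W] [FiniteDimensional k V]
    (f : V →ₗ[k] W) (p : Submodule k V) (h : p ⊓ LinearMap.ker f = ⊥) :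
    Module.finrank k (Submodule.map f p) = Module.finrank k p := by
  have := finrank_map_add f p
  rwa [h, finrank_bot, add_zero] at this

/-- The key induction: any subrepresentation of an `m`-fold direct sum of `M`
(realized concretely inside `Fin m → (Fin (d i) → k)`) satisfies the same linear
inequality as the subrepresentations of `M` itself. -/
private lemma ds_lemma {k : Type} [Field k] (c : Q.V → ℤ) {d : Q.V → ℕ} (M : Q.Rep k d)
    (hM : ∀ U : ∀ i : Q.V, Submodule k (Fin (d i) → k), IsSubrep M U →
      (∑ i, c i * (Module.finrank k (U i) : ℤ)) ≤ 0) :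
    ∀ m : ℕ, ∀ U : ∀ i : Q.V, Submodule k (Fin m → (Fin (d i) → k)),
      (∀ a : Q.A, ∀ x ∈ U (Q.src a), (fun t => (M a).mulVec (x t)) ∈ U (Q.tgt a)) →
      (∑ i, c i * (Module.finrank k (U i) : ℤ)) ≤ 0 := by
  intro m
  induction m with
  | zero =>
    intro U _
    have hz : ∀ i : Q.V, Module.finrank k (U i) = 0 := by
      intro i
      have hb : U i = ⊥ := by
        rw [eq_bot_iff]
        intro x _
        have hx0 : x = 0 := funext fun t => t.elim0
        simp [hx0]
      rw [hb, finrank_bot]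
    simp [hz]
  | succ m ih =>
    intro U hU
    -- evaluation at 0 and at the tail
    set ε : ∀ i : Q.V, (Fin (m+1) → (Fin (d i) → k)) →ₗ[k] (Fin (d i) → k) :=
      fun i => LinearMap.proj 0 with hε
    set π : ∀ i : Q.V, (Fin (m+1) → (Fin (d i) → k)) →ₗ[k] (Fin m → (Fin (d i) → k)) :=
      fun i => LinearMap.funLeft k _ Fin.succ with hπ
    set U0 : ∀ i : Q.V, Submodule k (Fin (d i) → k) :=
      fun i => Submodule.map (ε i) (U i) with hU0
    set Uk : ∀ i : Q.V, Submodule k (Fin m → (Fin (d i) → k)) :=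
      fun i => Submodule.map (π i) (U i ⊓ LinearMap.ker (ε i)) with hUk
    have hsub0 : IsSubrep M U0 := by
      intro a y hy
      obtain ⟨x, hx, rfl⟩ := hy
      exact ⟨fun t => (M a).mulVec (x t), hU a x hx, rfl⟩
    have hsubk : ∀ a : Q.A, ∀ x ∈ Uk (Q.src a),
        (fun t => (M a).mulVec (x t)) ∈ Uk (Q.tgt a) := by
      intro a y hy
      obtain ⟨x, ⟨hx1, hx2⟩, rfl⟩ := hy
      refine ⟨fun t => (M a).mulVec (x t), ⟨hU a x hx1, ?_⟩, rfl⟩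
      have hx0 : x 0 = 0 := hx2
      show (M a).mulVec (x 0) = 0
      rw [hx0, Matrix.mulVec_zero]
    have hrank : ∀ i : Q.V, Module.finrank k (U i)
        = Module.finrank k (U0 i) + Module.finrank k (Uk i) := by
      intro i
      have h1 := finrank_map_add (ε i) (U i)
      have h2 : Module.finrank k (Submodule.map (π i) (U i ⊓ LinearMap.ker (ε i)))
          = Module.finrank k ↥(U i ⊓ LinearMap.ker (ε i)) := by
        apply finrank_map_disjoint
        rw [eq_bot_iff]
        rintro x ⟨⟨_, hker⟩, hpi⟩
        have hx0 : x 0 = 0 := hker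
        have hxs : ∀ t : Fin m, x t.succ = 0 := by
          intro t
          have : (LinearMap.funLeft k (Fin (d i) → k) Fin.succ) x = 0 := hpi
          exact congrFun this t
        have : x = 0 := by
          funext t
          refine Fin.cases ?_ ?_ t
          · exact hx0
          · exact hxs
        simp [this]
      have h3 : Module.finrank k (U0 i)
          = Module.finrank k (Submodule.map (ε i) (U i)) := rfl
      have h4 : Module.finrank k (Uk i)
          = Module.finrank k (Submodule.map (π i) (U i ⊓ LinearMap.ker (ε i))) := rfl
      omega
    calc (∑ i, c i * (Module.finrank k (U i) : ℤ))
        = (∑ i, c i * (Module.finrank k (U0 i) : ℤ))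
          + (∑ i, c i * (Module.finrank k (Uk i) : ℤ)) := by
          rw [← Finset.sum_add_distrib]
          refine Finset.sum_congr rfl fun i _ => ?_
          rw [hrank i]
          push_cast
          ring
      _ ≤ 0 + 0 := add_le_add (hM U0 hsub0) (ih Uk hsubk)
      _ = 0 := by ring

/-- Linear independence of vectors with entries in `k` is preserved by applying a
field embedding `φ : k →+* K` entrywise. -/
private lemma li_map {k K : Type} [Field k] [Field K] (φ : k →+* K) {n r : ℕ}
    (v : Fin r → (Fin n → k)) (hv : LinearIndependent k v) :
    LinearIndependent K (fun t => (fun j => φ (v t j)) : Fin r → (Fin n → K)) := by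
  letI : Algebra k K := φ.toAlgebra
  have hφ : algebraMap k K = φ := RingHom.algebraMap_toAlgebra φ
  let b := Basis.ofVectorSpace k K
  rw [linearIndependent_iff'] at hv ⊢
  intro s g hg t ht
  have hcoord : ∀ j : Fin n, (∑ t' ∈ s, (v t' j) • g t') = 0 := by
    intro j
    have := congrFun hg j
    simp only [Finset.sum_apply, Pi.smul_apply, Pi.zero_apply, smul_eq_mul] at this
    calc (∑ t' ∈ s, (v t' j) • g t') = ∑ t' ∈ s, g t' * φ (v t' j) := by
          refine Finset.sum_congr rfl fun t' _ => ?_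
          rw [Algebra.smul_def, hφ, mul_comm]
      _ = 0 := this
  have hrep : ∀ u, ∀ j : Fin n, (∑ t' ∈ s, (v t' j) * (b.repr (g t') u)) = 0 := by
    intro u j
    have h1 := congrArg b.repr (hcoord j)
    rw [map_sum, map_zero] at h1
    simp only [map_smul] at h1
    have h2 := congrArg (fun F => F u) h1
    simp only [Finsupp.finset_sum_apply, Finsupp.smul_apply, Finsupp.coe_zero,
      Pi.zero_apply, smul_eq_mul] at h2
    exact h2
  have hz : ∀ u, b.repr (g t) u = 0 := by
    intro u
    refine hv s (fun t' => b.repr (g t') u) ?_ t ht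
    funext j
    simp only [Finset.sum_apply, Pi.smul_apply, Pi.zero_apply, smul_eq_mul]
    calc (∑ t' ∈ s, b.repr (g t') u * v t' j)
        = ∑ t' ∈ s, (v t' j) * (b.repr (g t') u) := by
          exact Finset.sum_congr rfl fun t' _ => mul_comm _ _
      _ = 0 := hrep u j
  have : b.repr (g t) = 0 := Finsupp.ext hz
  exact b.repr.map_eq_zero_iff.mp this

/-- Spanning the `φ`-image of a subspace of `k^n` over `K` preserves the dimension. -/
private lemma finrank_span_map {k K : Type} [Field k] [Field K] (φ : k →+* K) {n : ℕ}
    (p : Submodule k (Fin n → k)) :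
    Module.finrank K (Submodule.span K ((fun x : Fin n → k => (fun j => φ (x j))) '' p))
      = Module.finrank k p := by
  classical
  set ψ : (Fin n → k) → (Fin n → K) := fun x => (fun j => φ (x j)) with hψ
  set r := Module.finrank k p with hr
  let bb := Module.finBasis k p
  set v : Fin r → (Fin n → k) := fun t => ((bb t : p) : Fin n → k) with hv
  have hvmem : ∀ t, v t ∈ p := fun t => (bb t).2
  have hli : LinearIndependent k v :=
    bb.linearIndependent.map' p.subtype p.ker_subtype
  have hliK : LinearIndependent K (fun t => ψ (v t)) := li_map φ v hli
  have hspan : Submodule.span K (ψ '' p) = Submodule.span K (Set.range fun t => ψ (v t)) := by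
    apply le_antisymm
    · rw [Submodule.span_le]
      rintro y ⟨x, hx, rfl⟩
      set cf : Fin r → k := fun t => bb.repr ⟨x, hx⟩ t with hcf
      have hxeq : x = ∑ t, cf t • v t := by
        have h0 := congrArg (Subtype.val : p → (Fin n → k)) (bb.sum_repr ⟨x, hx⟩).symm
        simpa only [cf, v, AddSubmonoidClass.coe_finset_sum, Submodule.coe_smul] using h0
      have himg : ψ x = ∑ t, φ (cf t) • ψ (v t) := by
        rw [hxeq]
        funext j
        simp [ψ, Finset.sum_apply, Pi.smul_apply, smul_eq_mul, map_sum, map_mul]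
      rw [himg]
      exact Submodule.sum_mem _ fun t _ => Submodule.smul_mem _ _
        (Submodule.subset_span ⟨t, rfl⟩)
    · rw [Submodule.span_le]
      rintro y ⟨t, rfl⟩
      exact Submodule.subset_span ⟨v t, hvmem t, rfl⟩
  rw [hspan, finrank_span_eq_card hliK, Fintype.card_fin]

end Aux

open FinQuiver in
/-- A representation of a quiver over a finite field is semistable iff its base change
to a finite extension field is semistable. -/
theorem semistable_iff_baseChange_semistable (k K : Type) [Field k] [Fintype k]
    [Field K] [Fintype K] (φ : k →+* K) (Q : FinQuiver) (Θ : Q.V → ℤ) (d : Q.V → ℕ)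
    (hd : d ≠ 0) (M : Q.Rep k d) :
    Semistable Θ M ↔ Semistable Θ (mapRep φ M) := by
  classical
  rw [semistable_iff_lin Θ hd M, semistable_iff_lin Θ hd (mapRep φ M)]
  constructor
  · -- from `k` to `K` : restriction of scalars realizes the base change as a
    -- direct sum of copies of `M`, and `ds_lemma` applies.
    intro h U hU
    letI : Algebra k K := φ.toAlgebra
    have hφ : algebraMap k K = φ := RingHom.algebraMap_toAlgebra φ
    set m := Module.finrank k K with hm
    let b := Module.finBasis k K
    let E : ∀ n : ℕ, (Fin n → K) ≃ₗ[k] (Fin m → (Fin n → k)) :=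
      fun n => (LinearEquiv.piCongrRight fun _ : Fin n => b.equivFun).trans (flipLE k)
    have hE : ∀ (n : ℕ) (y : Fin n → K) (t : Fin m) (j : Fin n),
        E n y t j = b.repr (y j) t := by
      intro n y t j
      simp [E, flipLE, LinearEquiv.trans_apply, LinearEquiv.piCongrRight_apply,
        Module.Basis.equivFun_apply]
    have hcomm : ∀ (a : Q.A) (y : Fin (d (Q.src a)) → K),
        E (d (Q.tgt a)) ((mapRep φ M a).mulVec y)
          = fun t => (M a).mulVec (E (d (Q.src a)) y t) := by
      intro a y
      funext t j
      show E (d (Q.tgt a)) ((mapRep φ M a).mulVec y) t j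
        = (M a).mulVec (E (d (Q.src a)) y t) j
      rw [hE]
      have h1 : (mapRep φ M a).mulVec y j = ∑ l, M a j l • y l := by
        simp [mapRep, Matrix.mulVec, dotProduct, Matrix.map_apply,
          Algebra.smul_def, hφ]
      calc b.repr ((mapRep φ M a).mulVec y j) t
          = (∑ l, M a j l • b.repr (y l)) t := by
            rw [h1, map_sum]
            simp only [map_smul]
        _ = ∑ l, M a j l * b.repr (y l) t := by
            rw [Finsupp.finset_sum_apply]
            simp [Finsupp.smul_apply]
        _ = (M a).mulVec (E (d (Q.src a)) y t) j := by
            simp [Matrix.mulVec, dotProduct, hE]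
    set U' : ∀ i : Q.V, Submodule k (Fin m → (Fin (d i) → k)) :=
      fun i => Submodule.map (E (d i)).toLinearMap ((U i).restrictScalars k) with hU'
    have hsub' : ∀ a : Q.A, ∀ x ∈ U' (Q.src a),
        (fun t => (M a).mulVec (x t)) ∈ U' (Q.tgt a) := by
      intro a x hx
      obtain ⟨y, hy, rfl⟩ := hx
      replace hy : y ∈ U (Q.src a) := hy
      refine ⟨(mapRep φ M a).mulVec y, ?_, ?_⟩
      · exact hU a y hy
      · show E (d (Q.tgt a)) ((mapRep φ M a).mulVec y)
          = fun t => (M a).mulVec (E (d (Q.src a)) y t)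
        exact hcomm a y
    have hrk : ∀ i, Module.finrank k (U' i) = m * Module.finrank K (U i) := by
      intro i
      rw [hU']
      rw [LinearEquiv.finrank_map_eq]
      have e2 : Module.finrank k ((U i).restrictScalars k) = Module.finrank k (U i) :=
        LinearEquiv.finrank_eq ((Submodule.restrictScalarsEquiv k K (Fin (d i) → K) (U i)).restrictScalars k)
      rw [e2, ← Module.finrank_mul_finrank k K (U i)]
    have hds := ds_lemma _ M h m U' hsub'
    have hds' : (m : ℤ) * (∑ i, ((∑ j, (d j : ℤ)) * Θ i - (∑ j, Θ j * (d j : ℤ)))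
        * (Module.finrank K (U i) : ℤ)) ≤ 0 := by
      calc (m : ℤ) * (∑ i, ((∑ j, (d j : ℤ)) * Θ i - (∑ j, Θ j * (d j : ℤ)))
              * (Module.finrank K (U i) : ℤ))
          = ∑ i, ((∑ j, (d j : ℤ)) * Θ i - (∑ j, Θ j * (d j : ℤ)))
              * (Module.finrank k (U' i) : ℤ) := by
            rw [Finset.mul_sum]
            refine Finset.sum_congr rfl fun i _ => ?_
            rw [hrk i]
            push_cast
            ring
        _ ≤ 0 := hds
    have hm0 : 0 < m := Module.finrank_pos
    by_contra hcon
    push_neg at hcon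
    have : (0 : ℤ) < (m : ℤ) * (∑ i, ((∑ j, (d j : ℤ)) * Θ i - (∑ j, Θ j * (d j : ℤ)))
        * (Module.finrank K (U i) : ℤ)) := mul_pos (by exact_mod_cast hm0) hcon
    linarith
  · -- from `K` to `k` : spanning the image of a subrepresentation.
    intro h U hU
    set U' : ∀ i : Q.V, Submodule K (Fin (d i) → K) :=
      fun i => Submodule.span K ((fun x : Fin (d i) → k => (fun j => φ (x j))) '' (U i))
      with hU'
    have hsub' : IsSubrep (mapRep φ M) U' := by
      intro a y hy
      have hmap : Submodule.map (Matrix.mulVecLin (mapRep φ M a)) (U' (Q.src a))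
          ≤ U' (Q.tgt a) := by
        rw [hU']
        rw [Submodule.map_span]
        rw [Submodule.span_le]
        rintro z ⟨w, ⟨x, hx, rfl⟩, rfl⟩
        have : (Matrix.mulVecLin (mapRep φ M a)) (fun j => φ (x j))
            = fun j => φ ((M a).mulVec x j) := by
          funext j
          simp [Matrix.mulVecLin_apply, mapRep, Matrix.mulVec, dotProduct,
            Matrix.map_apply, map_sum, map_mul]
        rw [this]
        exact Submodule.subset_span ⟨(M a).mulVec x, hU a x hx, rfl⟩
      have := hmap ⟨y, hy, rfl⟩
      simpa [Matrix.mulVecLin_apply] using this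
    have hrk : ∀ i, Module.finrank K (U' i) = Module.finrank k (U i) :=
      fun i => finrank_span_map φ (U i)
    have hle := h U' hsub'
    calc (∑ i, ((∑ j, (d j : ℤ)) * Θ i - (∑ j, Θ j * (d j : ℤ)))
            * (Module.finrank k (U i) : ℤ))
        = ∑ i, ((∑ j, (d j : ℤ)) * Θ i - (∑ j, Θ j * (d j : ℤ)))
            * (Module.finrank K (U' i) : ℤ) := by
          refine Finset.sum_congr rfl fun i _ => ?_
          rw [hrk i]
      _ ≤ 0 := hle
end

section
/- Let k be a finite field, Q a finite quiver, Θ a stability, and M a stable k-representation of Q. Then every nonzero endomorphism of M is an isomorphism, the endomorphism ring End(M) is commutative, and hence End(M) is a finite field extension of k. -/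
set_option synthInstance.maxHeartbeats 1000000
set_option maxHeartbeats 1000000

/-! Kernel and image of an endomorphism of a stable representation are subrepresentations whose
dimension vectors add up to the dimension vector of the representation. The slope of a sum of two
nonzero dimension vectors lies between their slopes, so stability forces one of the two to vanish:
this is Schur's lemma. The endomorphism algebra is therefore a finite domain, hence a field by
Wedderburn's little theorem. -/

lemma add_div_add_lt {α : Type*} [Field α] [LinearOrder α] [IsStrictOrderedRing α]
    {a b c d x : α} (hb : 0 < b) (hd : 0 < d) (hab : a / b < x) (hcd : c / d < x) :
    (a + c) / (b + d) < x := by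
  rw [div_lt_iff₀ hb] at hab
  rw [div_lt_iff₀ hd] at hcd
  rw [div_lt_iff₀ (add_pos hb hd)]
  linarith

namespace FinQuiver

variable {Q : FinQuiver}

lemma slope_add_lt (Θ : Q.V → ℤ) {e e' : Q.V → ℕ} (he : e ≠ 0) (he' : e' ≠ 0) {q : ℚ}
    (hlt : slope Θ e < q) (hlt' : slope Θ e' < q) : slope Θ (e + e') < q := by
  have total_pos : ∀ {f : Q.V → ℕ}, f ≠ 0 → (0 : ℚ) < ((∑ i, f i : ℕ) : ℚ) := fun hf => by
    obtain ⟨i, hi⟩ := Function.ne_iff.1 hf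
    exact_mod_cast Finset.sum_pos' (fun _ _ => Nat.zero_le _)
      ⟨i, Finset.mem_univ i, Nat.pos_of_ne_zero hi⟩
  have h := add_div_add_lt (total_pos he) (total_pos he') hlt hlt'
  unfold slope at h ⊢
  push_cast [Pi.add_apply, mul_add, Finset.sum_add_distrib] at h ⊢
  exact h

variable {k : Type} [Field k] {d : Q.V → ℕ}

lemma dimVec_eq_zero_iff {U : ∀ i : Q.V, Submodule k (Fin (d i) → k)} :
    dimVec U = 0 ↔ U = fun _ => ⊥ := by
  simp only [funext_iff, dimVec, Pi.zero_apply, Submodule.finrank_eq_zero]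

lemma dimVec_top : dimVec (fun i : Q.V => (⊤ : Submodule k (Fin (d i) → k))) = d := by
  funext i
  simp [dimVec]

lemma Stable.eq_bot_or_eq_bot_of_dimVec_add_eq {Θ : Q.V → ℤ} {M : Q.Rep k d} (hM : Stable Θ M)
    {U W : ∀ i : Q.V, Submodule k (Fin (d i) → k)} (hU : IsSubrep M U) (hW : IsSubrep M W)
    (hdim : dimVec U + dimVec W = d) : (U = fun _ => ⊥) ∨ (W = fun _ => ⊥) := by
  by_contra! ⟨hU0, hW0⟩
  rw [Ne, ← dimVec_eq_zero_iff] at hU0 hW0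
  have hUtop : U ≠ fun _ => ⊤ := by
    rintro rfl
    rw [dimVec_top, add_eq_left] at hdim
    exact hW0 hdim
  have hWtop : W ≠ fun _ => ⊤ := by
    rintro rfl
    rw [dimVec_top, add_eq_right] at hdim
    exact hU0 hdim
  have h := slope_add_lt Θ hU0 hW0
    (hM U hU (mt dimVec_eq_zero_iff.2 hU0) hUtop) (hM W hW (mt dimVec_eq_zero_iff.2 hW0) hWtop)
  rw [hdim] at h
  exact lt_irrefl _ h

def kerFam (f : ∀ i : Q.V, Matrix (Fin (d i)) (Fin (d i)) k) :
    ∀ i : Q.V, Submodule k (Fin (d i) → k) :=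
  fun i => LinearMap.ker (f i).mulVecLin

def rangeFam (f : ∀ i : Q.V, Matrix (Fin (d i)) (Fin (d i)) k) :
    ∀ i : Q.V, Submodule k (Fin (d i) → k) :=
  fun i => LinearMap.range (f i).mulVecLin

variable {f : ∀ i : Q.V, Matrix (Fin (d i)) (Fin (d i)) k}

lemma dimVec_kerFam_add_dimVec_rangeFam : dimVec (kerFam f) + dimVec (rangeFam f) = d := by
  funext i
  have h := LinearMap.finrank_range_add_finrank_ker (f i).mulVecLin
  rwa [Module.finrank_fin_fun, add_comm] at h

variable {M : Q.Rep k d}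

lemma isSubrep_kerFam (hf : f ∈ EndAlg M) : IsSubrep M (kerFam f) := by
  intro a x hx
  simp only [kerFam, LinearMap.mem_ker, Matrix.mulVecLin_apply] at hx ⊢
  rw [Matrix.mulVec_mulVec, hf a, ← Matrix.mulVec_mulVec, hx, Matrix.mulVec_zero]

lemma isSubrep_rangeFam (hf : f ∈ EndAlg M) : IsSubrep M (rangeFam f) := by
  rintro a _ ⟨y, rfl⟩
  exact ⟨(M a).mulVec y, by
    simp only [Matrix.mulVecLin_apply, Matrix.mulVec_mulVec, hf a]⟩

lemma Stable.isUnit_apply_of_mem_endAlg {Θ : Q.V → ℤ} (hM : Stable Θ M) (hf : f ∈ EndAlg M)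
    (hf0 : f ≠ 0) (i : Q.V) : IsUnit (f i) := by
  rcases hM.eq_bot_or_eq_bot_of_dimVec_add_eq (isSubrep_kerFam hf) (isSubrep_rangeFam hf)
    dimVec_kerFam_add_dimVec_rangeFam with hker | hrange
  · rw [← Matrix.mulVec_injective_iff_isUnit, ← Matrix.coe_mulVecLin, ← LinearMap.ker_eq_bot]
    exact congrFun hker i
  · refine absurd (funext fun j => ?_) hf0
    have h : (f j).mulVecLin = 0 := LinearMap.range_eq_bot.1 (congrFun hrange j)
    rw [← Matrix.toLin'_apply', LinearEquiv.map_eq_zero_iff] at h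
    exact h

lemma nontrivial_endAlg (hd : d ≠ 0) : Nontrivial (EndAlg M) := by
  obtain ⟨i, hi⟩ := Function.ne_iff.1 hd
  have : Nonempty (Fin (d i)) := ⟨⟨0, Nat.pos_of_ne_zero hi⟩⟩
  have := Pi.nontrivial_at (f := fun j : Q.V => Matrix (Fin (d j)) (Fin (d j)) k) i
  infer_instance

lemma Stable.noZeroDivisors_endAlg {Θ : Q.V → ℤ} (hM : Stable Θ M) :
    NoZeroDivisors (EndAlg M) where
  eq_zero_or_eq_zero_of_mul_eq_zero {f g} hfg := or_iff_not_imp_left.2 fun hf0 =>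
    Subtype.ext <| funext fun i =>
      (hM.isUnit_apply_of_mem_endAlg f.2 (by simpa using hf0) i).mul_right_eq_zero.1
        (congrFun (congrArg Subtype.val hfg) i)

lemma Stable.isDomain_endAlg {Θ : Q.V → ℤ} (hM : Stable Θ M) (hd : d ≠ 0) :
    IsDomain (EndAlg M) :=
  have := nontrivial_endAlg (M := M) hd
  have := hM.noZeroDivisors_endAlg
  NoZeroDivisors.to_isDomain _

end FinQuiver

open FinQuiver in
/-- For a stable representation `M` of a quiver over a finite field `k`, every nonzero
endomorphism of `M` is an isomorphism (i.e. invertible at every vertex), the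
endomorphism ring is commutative, and hence `End(M)` is a finite field extension
of `k`. -/
theorem end_of_stable_is_finite_field (k : Type) [Field k] [Fintype k] (Q : FinQuiver)
    (Θ : Q.V → ℤ) (d : Q.V → ℕ) (hd : d ≠ 0) (M : Q.Rep k d) (hM : Stable Θ M) :
    (∀ f : ↥(EndAlg M), f ≠ 0 → ∀ i : Q.V,
      IsUnit ((f : ∀ i : Q.V, Matrix (Fin (d i)) (Fin (d i)) k) i)) ∧
    (∀ f g : ↥(EndAlg M), f * g = g * f) ∧
    IsField ↥(EndAlg M) ∧
    FiniteDimensional k ↥(EndAlg M) := by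
  have := hM.isDomain_endAlg hd
  have hfield : IsField (EndAlg M) := Finite.isDomain_to_isField _
  exact ⟨fun f hf => hM.isUnit_apply_of_mem_endAlg f.2 (by simpa using hf), hfield.mul_comm,
    hfield, inferInstance⟩
end
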